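/- (Deep Sets representation for countable universe) Let C be a countable set and let f be a function taking as input an element x ∈ C together with a finite subset S ⊆ C \ {x}, with values in ℝ, such that f depends on S only as a set (i.e., it is automatically permutation invariant since the input is a set). Then there exist functions φ₁ : C → ℝ, φ₂ : C → ℝ, and ρ : ℝ → ℝ such that for all such (x, S), f(x, S) = ρ(φ₁(x) + Σ_{y ∈ S} φ₂(y)). -/

import Mathlib

/-!
Fix an injection `c : C → ℕ` and send `x` to `2 ^ (2 c x)` and each `y ∈ S` to `2 ^ (2 c y + 1)`.
Then `φ₁ x + ∑ y ∈ S, φ₂ y` is a natural number whose binary digits are exactly the even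
position `2 c x` and the odd positions `2 c y + 1`, `y ∈ S`, so it determines the pair `(x, S)`;
`ρ` is `f` read off through this code and extended arbitrarily to all of `ℝ`.
-/

open Finset Function

theorem Finset.injective_sum_two_pow_comp {α : Type*} {g : α → ℕ} (hg : Injective g) :
    Injective fun T : Finset α => ∑ a ∈ T, 2 ^ g a := fun T T' h =>
  map_injective ⟨g, hg⟩ <| geomSum_injective le_rfl <| by
    simpa only [sum_map, Embedding.coeFn_mk] using h

theorem Finset.injective_singleton_disjSum {α β : Type*} :
    Injective fun p : α × Finset β => ({p.1} : Finset α).disjSum p.2 := by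
  rintro ⟨x, S⟩ ⟨x', S'⟩ h
  have hx : x = x' := by simpa using (Finset.ext_iff.1 h (.inl x)).1
  have hS : S = S' := Finset.ext fun y => by simpa using Finset.ext_iff.1 h (.inr y)
  rw [hx, hS]

theorem exists_injective_add_sum (C : Type*) [Countable C] :
    ∃ φ₁ φ₂ : C → ℝ, Injective fun p : C × Finset C => φ₁ p.1 + ∑ y ∈ p.2, φ₂ y := by
  obtain ⟨c, hc⟩ := Countable.exists_injective_nat C
  have hg : Injective (Sum.elim (fun x => 2 * c x) (fun y => 2 * c y + 1)) :=
    ((mul_right_injective₀ two_ne_zero).comp hc).sumElim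
      ((add_left_injective 1).comp <| (mul_right_injective₀ two_ne_zero).comp hc)
      fun _ _ => by dsimp only [comp_apply]; omega
  refine ⟨fun x => 2 ^ (2 * c x), fun y => 2 ^ (2 * c y + 1), ?_⟩
  have hcode := Nat.cast_injective (R := ℝ) |>.comp <|
    (injective_sum_two_pow_comp hg).comp injective_singleton_disjSum
  convert hcode using 1
  funext p
  simp [sum_disjSum]

/-- Deep Sets representation over a countable universe: any function of a
product `x` and the finite set `S` of its competitors (with `x ∉ S`) can be
written as `ρ (φ₁ x + ∑_{y ∈ S} φ₂ y)`. -/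
theorem stmt3 (C : Type*) [Countable C]
    (f : ∀ x : C, {S : Finset C // x ∉ S} → ℝ) :
    ∃ (φ₁ φ₂ : C → ℝ) (ρ : ℝ → ℝ),
      ∀ (x : C) (S : {S : Finset C // x ∉ S}),
        f x S = ρ (φ₁ x + ∑ y ∈ S.1, φ₂ y) := by
  obtain ⟨φ₁, φ₂, hinj⟩ := exists_injective_add_sum C
  let code (p : Σ x : C, {S : Finset C // x ∉ S}) : ℝ := φ₁ p.1 + ∑ y ∈ p.2.1, φ₂ y
  have hcode : Injective code :=
    hinj.comp <| Subtype.val_injective.comp (Equiv.subtypeProdEquivSigmaSubtype _).symm.injective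
  exact ⟨φ₁, φ₂, extend code (fun p => f p.1 p.2) 0, fun x S =>
    (hcode.extend_apply (fun p => f p.1 p.2) 0 ⟨x, S⟩).symm⟩
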